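/- Let γ ∈ (0,1), let n ≥ 4 be an integer, and let f ∈ C³(ℝⁿ) be bounded together with all its partial derivatives up to order 3. Then the integrals I₀ = ∫_{ℝⁿ} w_{1,0}(x̄)^p dx̄ and I₂ = ∫_{ℝⁿ} |x̄|² w_{1,0}(x̄)^p dx̄ are finite, and there exist C > 0 and ε₀ > 0 such that for all ε ∈ (0, ε₀): | ∫_{ℝⁿ} f(x̄) w_{ε,0}(x̄)^p dx̄ − f(0) I₀ − ε² (Δf(0)/(2n)) I₂ | ≤ C ε³, where Δf = Σ_{i=1}^n ∂_{ii} f is the Euclidean Laplacian. -/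

import Mathlib

/-!
Substituting `y = ε z` turns `w_{ε,0}(y)^p dy` into `α^p (1 + |z|²)^{-n} dz`, so the integral
equals `α^p ∫ f(ε z) (1 + |z|²)^{-n} dz`. Expand `f(ε z)` to second order at `0`: the constant
term gives `f(0) I₀`; the linear term integrates to zero by the symmetry `z ↦ -z`; and by the
reflections `z_i ↦ -z_i` and the coordinate permutations, the quadratic term leaves only the
diagonal moments `∫ z_i² (1 + |z|²)^{-n} = I₂ / (n α^p)`, which gives `ε² Δf(0) I₂ / (2n)`.
The Taylor remainder is at most `M ε³ |z|³`, where `M` bounds `D³f`, and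
`|z|³ (1 + |z|²)^{-n}` is integrable because `n ≥ 4`.
-/

open MeasureTheory Real

noncomputable section

/-- The normalizing constant `α_{n,γ}`. -/
def alphaC (n : ℕ) (γ : ℝ) : ℝ :=
  2 ^ (((n : ℝ) - 2 * γ) / 2) *
    (Real.Gamma (((n : ℝ) + 2 * γ) / 2) / Real.Gamma (((n : ℝ) - 2 * γ) / 2)) ^
      (((n : ℝ) - 2 * γ) / (4 * γ))

/-- The bubble `w_{ε,0}` on `ℝ^n`. -/
def bubble (n : ℕ) (γ ε : ℝ) (y : Fin n → ℝ) : ℝ :=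
  alphaC n γ * (ε / (ε ^ 2 + ∑ i, (y i) ^ 2)) ^ (((n : ℝ) - 2 * γ) / 2)

/-- The exponent `p = 2n/(n-2γ) = 2* + 1`. -/
def pexp (n : ℕ) (γ : ℝ) : ℝ := 2 * (n : ℝ) / ((n : ℝ) - 2 * γ)

/-- The Laplacian of `f` at a point, as a sum of second partial derivatives. -/
def lapAt (n : ℕ) (f : (Fin n → ℝ) → ℝ) (x : Fin n → ℝ) : ℝ :=
  ∑ i, fderiv ℝ (fun z => fderiv ℝ f z (Pi.single i 1)) x (Pi.single i 1)

section Taylor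

variable {E F : Type*} [NormedAddCommGroup E] [NormedSpace ℝ E]
  [NormedAddCommGroup F] [NormedSpace ℝ F]

theorem norm_le_mul_pow_succ_of_norm_fderiv_le {g : E → F} {g' : E → E →L[ℝ] F}
    (hg : ∀ y, HasFDerivAt g (g' y) y) (hg0 : g 0 = 0) {C : ℝ} (hC : 0 ≤ C) {k : ℕ}
    (hbound : ∀ y, ‖g' y‖ ≤ C * ‖y‖ ^ k) (x : E) : ‖g x‖ ≤ C * ‖x‖ ^ (k + 1) := by
  have hball : ∀ y ∈ Metric.closedBall (0 : E) ‖x‖, ‖g' y‖ ≤ C * ‖x‖ ^ k := fun y hy =>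
    (hbound y).trans (by gcongr; simpa using hy)
  have h := (convex_closedBall (0 : E) ‖x‖).norm_image_sub_le_of_norm_hasFDerivWithin_le
    (fun y _ => (hg y).hasFDerivWithinAt) hball
    (Metric.mem_closedBall_self (norm_nonneg x)) (by simp [Metric.mem_closedBall] : x ∈ _)
  rw [hg0, sub_zero, sub_zero] at h
  calc ‖g x‖ ≤ C * ‖x‖ ^ k * ‖x‖ := h
    _ = C * ‖x‖ ^ (k + 1) := by ring

theorem abs_sub_taylor_two_le {f : E → ℝ} (hf : ContDiff ℝ 3 f) {M : ℝ}
    (hM : ∀ x, ‖iteratedFDeriv ℝ 3 f x‖ ≤ M) (x : E) :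
    |f x - f 0 - fderiv ℝ f 0 x - (1 / 2) * fderiv ℝ (fderiv ℝ f) 0 x x| ≤ M * ‖x‖ ^ 3 := by
  set B := fderiv ℝ (fderiv ℝ f) 0
  have hd1 : ContDiff ℝ 2 (fderiv ℝ f) := hf.fderiv_right (m := 2) (by norm_num)
  have hd2 : Differentiable ℝ (fderiv ℝ (fderiv ℝ f)) :=
    (hd1.fderiv_right (m := 1) (by norm_num)).differentiable (by norm_num)
  have hM0 : 0 ≤ M := (norm_nonneg _).trans (hM 0)
  have hD2 := norm_le_mul_pow_succ_of_norm_fderiv_le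
    (g := fun y => fderiv ℝ (fderiv ℝ f) y - B)
    (fun y => (hd2 y).hasFDerivAt.sub_const B) (sub_self B) hM0 (k := 0) (fun y => by
      rw [pow_zero, mul_one]
      convert hM y using 1
      rw [← norm_iteratedFDeriv_fderiv, ← norm_iteratedFDeriv_fderiv, ← norm_iteratedFDeriv_fderiv,
        norm_iteratedFDeriv_zero])
  have hD1 := norm_le_mul_pow_succ_of_norm_fderiv_le
    (g := fun y => fderiv ℝ f y - fderiv ℝ f 0 - B y)
    (fun y => (((hd1.differentiable (by norm_num)) y).hasFDerivAt.sub_const _).sub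
      B.hasFDerivAt) (by simp) hM0 hD2
  have hsymm : ∀ v w, B v w = B w v := hf.contDiffAt.isSymmSndFDerivAt (by simp; norm_num)
  have hquad : ∀ y, HasFDerivAt (fun y => (1 / 2) * B y y) (B y) y := fun y => by
    have h : HasFDerivAt (fun y => B y y) (B y + B.flip y) y := by
      simpa using (B.hasFDerivAt (x := y)).clm_apply (hasFDerivAt_id y)
    refine (h.const_mul (1 / 2 : ℝ)).congr_fderiv ?_
    ext v
    simp [hsymm v y]
    ring
  have h := norm_le_mul_pow_succ_of_norm_fderiv_le
    (g := fun y => f y - f 0 - fderiv ℝ f 0 y - (1 / 2) * B y y)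
    (fun y => ((((hf.differentiable (by norm_num)) y).hasFDerivAt.sub_const _).sub
      (fderiv ℝ f 0).hasFDerivAt).sub (hquad y)) (by simp) hM0 hD1 x
  simpa only [Real.norm_eq_abs] using h

end Taylor

section Radial

variable {n : ℕ}

/-- The squared Euclidean norm `|z|²`; the norm `‖z‖` on `Fin n → ℝ` is the sup norm. -/
def sumSq (z : Fin n → ℝ) : ℝ := ∑ i, z i ^ 2

theorem sumSq_nonneg (z : Fin n → ℝ) : 0 ≤ sumSq z :=
  Finset.sum_nonneg fun i _ => sq_nonneg (z i)

theorem sq_norm_le_sumSq (z : Fin n → ℝ) : ‖z‖ ^ 2 ≤ sumSq z := by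
  have h : ‖z‖ ≤ √(sumSq z) := (pi_norm_le_iff_of_nonneg (sqrt_nonneg _)).2 fun i => by
    rw [Real.norm_eq_abs, ← sqrt_sq_eq_abs]
    exact sqrt_le_sqrt (Finset.single_le_sum (fun j _ => sq_nonneg (z j)) (Finset.mem_univ i))
  simpa [sq_sqrt (sumSq_nonneg z)] using pow_le_pow_left₀ (norm_nonneg z) h 2

theorem sumSq_le (z : Fin n → ℝ) : sumSq z ≤ n * ‖z‖ ^ 2 := by
  have h : ∀ i, z i ^ 2 ≤ ‖z‖ ^ 2 := fun i => by
    rw [← sq_abs, ← Real.norm_eq_abs]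
    exact pow_le_pow_left₀ (norm_nonneg _) (norm_le_pi_norm z i) 2
  simpa [sumSq] using Finset.sum_le_sum fun i (_ : i ∈ Finset.univ) => h i

theorem continuous_sumSq : Continuous (sumSq (n := n)) := by
  unfold sumSq
  fun_prop

theorem sumSq_neg (z : Fin n → ℝ) : sumSq (-z) = sumSq z := by
  simp [sumSq]

theorem sumSq_smul (c : ℝ) (z : Fin n → ℝ) : sumSq (c • z) = c ^ 2 * sumSq z := by
  simp [sumSq, Finset.mul_sum, mul_pow]

theorem integral_clm_mul_radial_eq_zero (L : (Fin n → ℝ) →L[ℝ] ℝ) (φ : ℝ → ℝ) :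
    ∫ z, L z * φ (sumSq z) = 0 := by
  have h := integral_neg_eq_self (fun z : Fin n → ℝ => L z * φ (sumSq z)) volume
  simp only [map_neg, sumSq_neg, neg_mul, integral_neg] at h
  linarith

theorem integral_coord_mul_coord_mul_radial_eq_zero {i j : Fin n} (hij : i ≠ j) (φ : ℝ → ℝ) :
    ∫ z, z i * z j * φ (sumSq z) = 0 := by
  let e : (Fin n → ℝ) ≃ᵐ (Fin n → ℝ) := MeasurableEquiv.piCongrRight fun k =>
    if k = i then MeasurableEquiv.neg ℝ else MeasurableEquiv.refl ℝ
  have he : MeasurePreserving e := volume_preserving_pi fun k => by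
    by_cases hk : k = i
    · simpa [hk] using Measure.measurePreserving_neg (volume : Measure ℝ)
    · simpa [hk] using MeasurePreserving.id (volume : Measure ℝ)
  have he_apply : ∀ z k, e z k = if k = i then -z k else z k := fun z k => by
    change (if k = i then MeasurableEquiv.neg ℝ else MeasurableEquiv.refl ℝ) (z k) = _
    split_ifs <;> rfl
  have h := he.integral_comp' fun z => z i * z j * φ (sumSq z)
  have hsq : ∀ z, sumSq (e z) = sumSq z := fun z => Finset.sum_congr rfl fun k _ => by
    by_cases hk : k = i <;> simp [he_apply, hk]
  simp only [hsq, he_apply, if_pos, if_neg hij.symm, neg_mul, integral_neg] at h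
  linarith

theorem integral_coord_sq_mul_radial (i j : Fin n) (φ : ℝ → ℝ) :
    ∫ z, z i ^ 2 * φ (sumSq z) = ∫ z, z j ^ 2 * φ (sumSq z) := by
  let e : (Fin n → ℝ) ≃ᵐ (Fin n → ℝ) :=
    MeasurableEquiv.arrowCongr' (Equiv.swap i j) (MeasurableEquiv.refl ℝ)
  have he : MeasurePreserving e := volume_preserving_arrowCongr' _ _ (MeasurePreserving.id _)
  have he_apply : ∀ z k, e z k = z (Equiv.swap i j k) := fun z k => by
    simp [e, MeasurableEquiv.arrowCongr', Equiv.arrowCongr', Equiv.arrowCongr]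
  have h := he.integral_comp' fun z => z j ^ 2 * φ (sumSq z)
  have hsq : ∀ z, sumSq (e z) = sumSq z := fun z => by
    simp only [sumSq, he_apply]
    exact Equiv.sum_comp (Equiv.swap i j) fun k => z k ^ 2
  simpa only [hsq, he_apply, Equiv.swap_apply_right] using h

theorem integral_coord_sq_mul_radial_eq_div (φ : ℝ → ℝ)
    (hφ : ∀ i, Integrable fun z : Fin n → ℝ => z i ^ 2 * φ (sumSq z)) (i : Fin n) :
    ∫ z, z i ^ 2 * φ (sumSq z) = (∫ z : Fin n → ℝ, sumSq z * φ (sumSq z)) / n := by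
  have hn : (n : ℝ) ≠ 0 := Nat.cast_ne_zero.2 (Fin.pos i).ne'
  have h : ∫ z : Fin n → ℝ, sumSq z * φ (sumSq z) = ∑ j : Fin n, ∫ z, z j ^ 2 * φ (sumSq z) := by
    simp only [sumSq, Finset.sum_mul]
    exact integral_finsetSum _ fun j _ => hφ j
  rw [h, Finset.sum_congr rfl fun j _ => integral_coord_sq_mul_radial j i φ]
  simp [hn]

theorem bilin_apply_eq_sum_pi_single (B : (Fin n → ℝ) →L[ℝ] (Fin n → ℝ) →L[ℝ] ℝ) (v w : Fin n → ℝ) :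
    B v w = ∑ i, ∑ j, B (Pi.single i 1) (Pi.single j 1) * (v i * w j) := by
  conv_lhs => rw [pi_eq_sum_univ' v, pi_eq_sum_univ' w]
  simp only [map_sum, map_smul, sum_apply, smul_apply, smul_eq_mul, Finset.mul_sum]
  rw [Finset.sum_comm]
  exact Finset.sum_congr rfl fun i _ => Finset.sum_congr rfl fun j _ => by ring

theorem integral_bilin_mul_radial (B : (Fin n → ℝ) →L[ℝ] (Fin n → ℝ) →L[ℝ] ℝ) (φ : ℝ → ℝ)
    (hφ : ∀ i j, Integrable fun z : Fin n → ℝ => z i * z j * φ (sumSq z)) :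
    ∫ z, B z z * φ (sumSq z) =
      (∑ i, B (Pi.single i 1) (Pi.single i 1)) / n * ∫ z : Fin n → ℝ, sumSq z * φ (sumSq z) := by
  have hφ' : ∀ i, Integrable fun z : Fin n → ℝ => z i ^ 2 * φ (sumSq z) := fun i => by
    simpa only [sq] using hφ i i
  have hdiag (i : Fin n) :
      ∫ z, ∑ j, B (Pi.single i 1) (Pi.single j 1) * (z i * z j * φ (sumSq z)) =
        B (Pi.single i 1) (Pi.single i 1) * ((∫ z : Fin n → ℝ, sumSq z * φ (sumSq z)) / n) := by
    rw [integral_finsetSum _ fun j _ => (hφ i j).const_mul _, Finset.sum_eq_single i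
      (fun j _ hji => by rw [integral_const_mul, integral_coord_mul_coord_mul_radial_eq_zero
        (Ne.symm hji), mul_zero]) (by simp), integral_const_mul,
      ← integral_coord_sq_mul_radial_eq_div φ hφ' i]
    simp only [sq]
  calc ∫ z, B z z * φ (sumSq z)
      = ∫ z, ∑ i, ∑ j, B (Pi.single i 1) (Pi.single j 1) * (z i * z j * φ (sumSq z)) := by
        congr 1
        ext z
        simp only [bilin_apply_eq_sum_pi_single B z z, Finset.sum_mul, mul_assoc]
    _ = _ := by
        rw [integral_finsetSum _ fun i _ => integrable_finsetSum _ fun j _ =>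
          (hφ i j).const_mul _]
        simp only [hdiag, ← Finset.sum_mul]
        ring

end Radial

section Profile

variable {n : ℕ}

def bubbleProfile (n : ℕ) (t : ℝ) : ℝ := ((1 + t) ^ n)⁻¹

theorem bubbleProfile_sumSq_nonneg (z : Fin n → ℝ) : 0 ≤ bubbleProfile n (sumSq z) := by
  have := sumSq_nonneg z
  unfold bubbleProfile
  positivity

theorem continuous_bubbleProfile_sumSq :
    Continuous fun z : Fin n → ℝ => bubbleProfile n (sumSq z) := by
  refine ((continuous_const.add continuous_sumSq).pow n).inv₀ fun z => ?_
  exact pow_ne_zero _ (by simp only [Pi.add_apply]; linarith [sumSq_nonneg z])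

theorem bubbleProfile_sumSq_le (z : Fin n → ℝ) :
    bubbleProfile n (sumSq z) ≤ 2 ^ n * ((1 + ‖z‖) ^ (2 * n))⁻¹ := by
  have hz := norm_nonneg z
  have h : (1 + ‖z‖) ^ 2 ≤ 2 * (1 + sumSq z) := by
    nlinarith [sq_norm_le_sumSq z, sq_nonneg (1 - ‖z‖)]
  have hS : 0 < 1 + sumSq z := by linarith [sumSq_nonneg z]
  calc bubbleProfile n (sumSq z) = ((1 + sumSq z)⁻¹) ^ n := (inv_pow _ _).symm
    _ ≤ (2 / (1 + ‖z‖) ^ 2) ^ n := by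
        refine pow_le_pow_left₀ (by positivity) ?_ n
        rw [le_div_iff₀ (by positivity), inv_mul_le_iff₀ hS]
        linarith
    _ = 2 ^ n * ((1 + ‖z‖) ^ (2 * n))⁻¹ := by rw [div_pow, pow_mul, div_eq_mul_inv]

theorem integrable_mul_bubbleProfile {F : (Fin n → ℝ) → ℝ} (hF : AEStronglyMeasurable F)
    {c : ℝ} {m : ℕ} (hm : m < n) (hb : ∀ z, |F z| ≤ c * (1 + ‖z‖) ^ m) :
    Integrable fun z => F z * bubbleProfile n (sumSq z) := by
  have hr : (Module.finrank ℝ (Fin n → ℝ) : ℝ) < (2 * n - m : ℕ) := by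
    rw [Module.finrank_fin_fun]; exact_mod_cast (by omega : n < 2 * n - m)
  refine ((integrable_one_add_norm hr).const_mul (c * 2 ^ n)).mono'
    (hF.mul continuous_bubbleProfile_sumSq.aestronglyMeasurable) (ae_of_all _ fun z => ?_)
  have ht : 0 < 1 + ‖z‖ := by positivity
  have hc : 0 ≤ c * (1 + ‖z‖) ^ m := (abs_nonneg _).trans (hb z)
  rw [Real.norm_eq_abs, abs_mul, abs_of_nonneg (bubbleProfile_sumSq_nonneg z), rpow_neg ht.le,
    rpow_natCast]
  calc |F z| * bubbleProfile n (sumSq z)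
      ≤ c * (1 + ‖z‖) ^ m * (2 ^ n * ((1 + ‖z‖) ^ (2 * n))⁻¹) :=
        mul_le_mul (hb z) (bubbleProfile_sumSq_le z) (bubbleProfile_sumSq_nonneg z) hc
    _ = c * 2 ^ n * ((1 + ‖z‖) ^ (2 * n - m))⁻¹ := by
        rw [← pow_sub_mul_pow _ (by omega : m ≤ 2 * n)]
        field_simp

theorem integrable_bubbleProfile_sumSq (hn : 0 < n) :
    Integrable fun z : Fin n → ℝ => bubbleProfile n (sumSq z) := by
  simpa using integrable_mul_bubbleProfile (F := fun _ => 1) (c := 1) (m := 0)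
    aestronglyMeasurable_const hn (by simp)

theorem integrable_sumSq_mul_bubbleProfile_sumSq (hn : 2 < n) :
    Integrable fun z : Fin n → ℝ => sumSq z * bubbleProfile n (sumSq z) :=
  integrable_mul_bubbleProfile (c := n) (m := 2) continuous_sumSq.aestronglyMeasurable hn
    fun z => by
    rw [abs_of_nonneg (sumSq_nonneg z)]
    refine (sumSq_le z).trans ?_
    have := norm_nonneg z
    gcongr
    linarith

theorem integrable_clm_mul_bubbleProfile (hn : 1 < n) (L : (Fin n → ℝ) →L[ℝ] ℝ) :
    Integrable fun z => L z * bubbleProfile n (sumSq z) :=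
  integrable_mul_bubbleProfile (c := ‖L‖) (m := 1) L.continuous.aestronglyMeasurable hn
    fun z => by
      simpa using (L.le_opNorm z).trans (by gcongr; linarith [norm_nonneg z])

theorem integrable_coord_mul_coord_mul_bubbleProfile (hn : 2 < n) (i j : Fin n) :
    Integrable fun z : Fin n → ℝ => z i * z j * bubbleProfile n (sumSq z) :=
  integrable_mul_bubbleProfile (c := 1) (m := 2) (by fun_prop) hn fun z => by
    have hz : ‖z‖ ≤ 1 + ‖z‖ := by linarith
    rw [abs_mul, one_mul, sq]
    exact mul_le_mul ((norm_le_pi_norm z i).trans hz) ((norm_le_pi_norm z j).trans hz)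
      (abs_nonneg _) (by positivity)

theorem integrable_bilin_mul_bubbleProfile (hn : 2 < n)
    (B : (Fin n → ℝ) →L[ℝ] (Fin n → ℝ) →L[ℝ] ℝ) :
    Integrable fun z => B z z * bubbleProfile n (sumSq z) :=
  integrable_mul_bubbleProfile (c := ‖B‖) (m := 2) (by fun_prop) hn fun z => by
    have hz : ‖z‖ ≤ 1 + ‖z‖ := by linarith
    calc |B z z| ≤ ‖B‖ * ‖z‖ * ‖z‖ := B.le_opNorm₂ z z
      _ ≤ ‖B‖ * (1 + ‖z‖) * (1 + ‖z‖) := by gcongr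
      _ = ‖B‖ * (1 + ‖z‖) ^ 2 := by ring

theorem integrable_norm_pow_mul_bubbleProfile {k : ℕ} (hk : k < n) :
    Integrable fun z : Fin n → ℝ => ‖z‖ ^ k * bubbleProfile n (sumSq z) :=
  integrable_mul_bubbleProfile (c := 1) (by fun_prop) hk fun z => by
    rw [one_mul, abs_of_nonneg (by positivity)]
    gcongr
    linarith

theorem lapAt_eq_sum {f : (Fin n → ℝ) → ℝ} {x : Fin n → ℝ}
    (hf : DifferentiableAt ℝ (fderiv ℝ f) x) :
    lapAt n f x = ∑ i, fderiv ℝ (fderiv ℝ f) x (Pi.single i 1) (Pi.single i 1) := by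
  refine Finset.sum_congr rfl fun i _ => ?_
  rw [fderiv_clm_apply hf (differentiableAt_const _)]
  simp

theorem abs_integral_comp_smul_mul_bubbleProfile_sub_le (hn : 3 < n)
    {f : (Fin n → ℝ) → ℝ} (hf : ContDiff ℝ 3 f) {M : ℝ}
    (hM : ∀ x, ‖iteratedFDeriv ℝ 3 f x‖ ≤ M) {ε : ℝ} (hε : 0 ≤ ε) :
    |(∫ z, f (ε • z) * bubbleProfile n (sumSq z)) -
        f 0 * (∫ z : Fin n → ℝ, bubbleProfile n (sumSq z)) -
        ε ^ 2 * (lapAt n f 0 / (2 * n)) *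
          ∫ z : Fin n → ℝ, sumSq z * bubbleProfile n (sumSq z)| ≤
      M * ε ^ 3 * ∫ z : Fin n → ℝ, ‖z‖ ^ 3 * bubbleProfile n (sumSq z) := by
  set L := fderiv ℝ f 0
  set B := fderiv ℝ (fderiv ℝ f) 0
  set R : (Fin n → ℝ) → ℝ := fun x => f x - f 0 - L x - (1 / 2) * B x x with hR_def
  have hM0 : 0 ≤ M := (norm_nonneg _).trans (hM 0)
  have hR : ∀ z, |R (ε • z)| ≤ M * ε ^ 3 * ‖z‖ ^ 3 := fun z => by
    refine (abs_sub_taylor_two_le hf hM (ε • z)).trans_eq ?_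
    rw [norm_smul, Real.norm_of_nonneg hε, mul_pow, mul_assoc]
  have hI0 := integrable_bubbleProfile_sumSq (n := n) (by omega)
  have hIL := integrable_clm_mul_bubbleProfile (by omega) L
  have hIB := integrable_bilin_mul_bubbleProfile (by omega) B
  have hIR : Integrable fun z => R (ε • z) * bubbleProfile n (sumSq z) :=
    integrable_mul_bubbleProfile (c := M * ε ^ 3) (m := 3)
      (by have := hf.continuous; simp only [hR_def]; fun_prop) hn fun z =>
      (hR z).trans (by gcongr; linarith [norm_nonneg z])
  have hsplit : ∀ z, f (ε • z) * bubbleProfile n (sumSq z) =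
      f 0 * bubbleProfile n (sumSq z) + ε * (L z * bubbleProfile n (sumSq z)) +
        ε ^ 2 / 2 * (B z z * bubbleProfile n (sumSq z)) +
        R (ε • z) * bubbleProfile n (sumSq z) := fun z => by
    simp only [hR_def, map_smul, smul_apply, smul_eq_mul]
    ring
  have hint : ∫ z, f (ε • z) * bubbleProfile n (sumSq z) =
      f 0 * (∫ z : Fin n → ℝ, bubbleProfile n (sumSq z)) +
        ε ^ 2 * (lapAt n f 0 / (2 * n)) *
          (∫ z : Fin n → ℝ, sumSq z * bubbleProfile n (sumSq z)) +
        ∫ z, R (ε • z) * bubbleProfile n (sumSq z) := by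
    simp only [hsplit]
    rw [integral_add ?_ hIR, integral_add ?_ (hIB.const_mul _),
      integral_add (hI0.const_mul _) (hIL.const_mul _), integral_const_mul, integral_const_mul,
      integral_const_mul, integral_clm_mul_radial_eq_zero,
      integral_bilin_mul_radial B _ (integrable_coord_mul_coord_mul_bubbleProfile (by omega)),
      ← lapAt_eq_sum ((hf.fderiv_right (m := 2) (by norm_num)).differentiable (by norm_num) 0)]
    · ring
    · exact (hI0.const_mul _).add (hIL.const_mul _)
    · exact ((hI0.const_mul _).add (hIL.const_mul _)).add (hIB.const_mul _)
  rw [hint]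
  convert_to |∫ z : Fin n → ℝ, R (ε • z) * bubbleProfile n (sumSq z)| ≤ _ using 2
  · ring
  rw [← Real.norm_eq_abs, ← integral_const_mul]
  refine norm_integral_le_of_norm_le ((integrable_norm_pow_mul_bubbleProfile hn).const_mul _)
    (ae_of_all _ fun z => ?_)
  rw [Real.norm_eq_abs, abs_mul, abs_of_nonneg (bubbleProfile_sumSq_nonneg z), ← mul_assoc]
  exact mul_le_mul_of_nonneg_right (hR z) (bubbleProfile_sumSq_nonneg z)

end Profile

section Bubble

variable {n : ℕ} {γ : ℝ}

theorem alphaC_pos (hγ : 0 < γ) (hn : 2 * γ < n) : 0 < alphaC n γ := by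
  have h₁ : 0 < Gamma ((n + 2 * γ) / 2) := Gamma_pos_of_pos (by linarith)
  have h₂ : 0 < Gamma ((n - 2 * γ) / 2) := Gamma_pos_of_pos (by linarith)
  unfold alphaC
  positivity

theorem bubble_rpow_pexp (hγ : 0 < γ) (hn : 2 * γ < n) {ε : ℝ} (hε : 0 < ε)
    (y : Fin n → ℝ) :
    bubble n γ ε y ^ pexp n γ = alphaC n γ ^ pexp n γ * (ε / (ε ^ 2 + sumSq y)) ^ n := by
  have hq : 0 ≤ ε / (ε ^ 2 + sumSq y) := by have := sumSq_nonneg y; positivity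
  have hexp : ((n : ℝ) - 2 * γ) / 2 * pexp n γ = n := by
    unfold pexp
    field_simp [(by linarith : (n : ℝ) - 2 * γ ≠ 0)]
  change (alphaC n γ * (ε / (ε ^ 2 + sumSq y)) ^ (((n : ℝ) - 2 * γ) / 2)) ^ pexp n γ = _
  rw [mul_rpow (alphaC_pos hγ hn).le (rpow_nonneg hq _), ← rpow_mul hq, hexp, rpow_natCast]

theorem bubble_one_rpow_pexp (hγ : 0 < γ) (hn : 2 * γ < n) (y : Fin n → ℝ) :
    bubble n γ 1 y ^ pexp n γ = alphaC n γ ^ pexp n γ * bubbleProfile n (sumSq y) := by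
  rw [bubble_rpow_pexp hγ hn one_pos, bubbleProfile, one_pow, one_div, inv_pow]

theorem integral_mul_bubble_rpow_pexp (hγ : 0 < γ) (hn : 2 * γ < n) {ε : ℝ} (hε : 0 < ε)
    (g : (Fin n → ℝ) → ℝ) :
    ∫ y, g y * bubble n γ ε y ^ pexp n γ =
      alphaC n γ ^ pexp n γ * ∫ z, g (ε • z) * bubbleProfile n (sumSq z) := by
  have hscale : ∀ z, bubble n γ ε (ε • z) ^ pexp n γ =
      (ε ^ n)⁻¹ * (alphaC n γ ^ pexp n γ * bubbleProfile n (sumSq z)) := fun z => by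
    have hS : 1 + sumSq z ≠ 0 := by linarith [sumSq_nonneg z]
    rw [bubble_rpow_pexp hγ hn hε, sumSq_smul, bubbleProfile,
      show ε ^ 2 + ε ^ 2 * sumSq z = ε * (ε * (1 + sumSq z)) by ring, ← div_div, div_self hε.ne',
      one_div, mul_inv, mul_pow, inv_pow]
    ring
  have h := Measure.integral_comp_smul_of_nonneg volume (fun y => g y * bubble n γ ε y ^ pexp n γ) ε
    (hR := hε.le)
  simp only [hscale, Module.finrank_fin_fun, smul_eq_mul, mul_left_comm (g _),
    integral_const_mul] at h
  exact (mul_left_cancel₀ (inv_ne_zero (pow_ne_zero n hε.ne')) h).symm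

end Bubble

/-- Second-order expansion of `∫ f w_{ε,0}^{2*+1}` as `ε → 0`. -/
theorem statement14 :
    ∀ (γ : ℝ) (n : ℕ) (f : (Fin n → ℝ) → ℝ), 0 < γ → γ < 1 → 4 ≤ n →
      ContDiff ℝ 3 f →
      (∀ m : ℕ, m ≤ 3 → ∃ Cb : ℝ, ∀ x, ‖iteratedFDeriv ℝ m f x‖ ≤ Cb) →
      Integrable (fun y : Fin n → ℝ => bubble n γ 1 y ^ pexp n γ) volume ∧
      Integrable (fun y : Fin n → ℝ => (∑ i, (y i) ^ 2) * bubble n γ 1 y ^ pexp n γ) volume ∧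
      ∃ C ε₀ : ℝ, 0 < C ∧ 0 < ε₀ ∧ ∀ ε : ℝ, 0 < ε → ε < ε₀ →
        |(∫ y : Fin n → ℝ, f y * bubble n γ ε y ^ pexp n γ) -
            f 0 * (∫ y : Fin n → ℝ, bubble n γ 1 y ^ pexp n γ) -
            ε ^ 2 * (lapAt n f 0 / (2 * (n : ℝ))) *
              (∫ y : Fin n → ℝ, (∑ i, (y i) ^ 2) * bubble n γ 1 y ^ pexp n γ)| ≤
          C * ε ^ 3 := by
  intro γ n f hγ _ hn hf hbound
  have h2γ : 2 * γ < n := by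
    have : (4 : ℝ) ≤ n := by exact_mod_cast hn
    linarith
  obtain ⟨M, hM⟩ := hbound 3 le_rfl
  have hM0 : 0 ≤ M := (norm_nonneg _).trans (hM 0)
  have hw := bubble_one_rpow_pexp hγ h2γ
  set A := alphaC n γ ^ pexp n γ
  have hA : 0 < A := rpow_pos_of_pos (alphaC_pos hγ h2γ) _
  have hw₂ : ∀ y, (∑ i, y i ^ 2) * bubble n γ 1 y ^ pexp n γ =
      A * (sumSq y * bubbleProfile n (sumSq y)) := fun y => by
    rw [hw]
    unfold sumSq
    ring
  set J := ∫ z : Fin n → ℝ, ‖z‖ ^ 3 * bubbleProfile n (sumSq z)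
  have hJ : 0 ≤ J := integral_nonneg fun z => mul_nonneg (by positivity)
    (bubbleProfile_sumSq_nonneg z)
  refine ⟨?_, ?_, A * M * J + 1, 1, by positivity, one_pos, fun ε hε _ => ?_⟩
  · simpa only [hw] using (integrable_bubbleProfile_sumSq (by omega)).const_mul A
  · simpa only [hw₂] using (integrable_sumSq_mul_bubbleProfile_sumSq (by omega)).const_mul A
  simp only [hw₂]
  simp only [hw, integral_mul_bubble_rpow_pexp hγ h2γ hε, integral_const_mul]
  have hE := mul_le_mul_of_nonneg_left
    (abs_integral_comp_smul_mul_bubbleProfile_sub_le (by omega) hf hM hε.le) hA.le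
  rw [← abs_of_pos hA, ← abs_mul, abs_of_pos hA] at hE
  refine (Eq.trans_le ?_ hE).trans ?_
  · congr 1
    ring
  · nlinarith [pow_pos hε 3]
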